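/- arXiv:0805.3205 — 2 statements merged into one kernel-verified Lean document; each statement's English description precedes it below -/
import Mathlib

section
/- Let Θ ⊆ ℝ be an interval, let a₁ > 0, a₂, b₁, b₂ ≥ 0 with b₁ + b₂ > 0, and let π : Θ → [0,∞) be a measurable probability density that is bounded away from zero, with inf_{θ∈Θ} π(θ) > (b₁ + b₂)/a₁. Then the Theorem-1 solution associated with π is identically one on Θ; equivalently, the membership function I ≡ 1 minimizes the risk R over all measurable I : Θ → [0,1], provided Θ has finite length (so that R(1) < ∞). -/
open MeasureTheory

/-- The Theorem-1 solution (optimal membership function) associated with the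
prior density `π` and the loss parameters `a₁, a₂, b₁, b₂`. -/
noncomputable def thmOneSol (a1 a2 b1 b2 : ℝ) (pr : ℝ → ℝ) (θ : ℝ) : ℝ :=
  if (a1 + a2) * pr θ < b1 then 0
  else if a1 * pr θ ≤ b1 + b2 then ((a1 + a2) * pr θ - b1) / (a2 * pr θ + b2)
  else 1

/-- The Bayes risk of a membership function `I` under the prior density `π`
on `Θ`, for the loss of equation (1); the integral is taken in `[0,∞]`. -/
noncomputable def risk (Θ : Set ℝ) (a1 a2 b1 b2 : ℝ) (pr I : ℝ → ℝ) : ENNReal :=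
  ∫⁻ θ in Θ, ENNReal.ofReal
    ((a1 * (1 - I θ) + a2 / 2 * (1 - I θ) ^ 2) * pr θ
      + b1 * I θ + b2 / 2 * (I θ) ^ 2)

theorem lt_mul_of_div_lt_csInf_image {α : Type*} {f : α → ℝ} {s : Set α} {a c : ℝ} {x : α}
    (ha : 0 < a) (hbdd : BddBelow (f '' s)) (hinf : c / a < sInf (f '' s)) (hx : x ∈ s) :
    c < a * f x := by
  have hle : sInf (f '' s) ≤ f x := csInf_le hbdd ⟨x, hx, rfl⟩
  rw [div_lt_iff₀ ha] at hinf
  nlinarith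

theorem thmOneSol_eq_one_of_lt {a1 a2 b1 b2 : ℝ} {pr : ℝ → ℝ} {θ : ℝ}
    (ha2 : 0 ≤ a2) (hb2 : 0 ≤ b2) (hpr : 0 ≤ pr θ) (h : b1 + b2 < a1 * pr θ) :
    thmOneSol a1 a2 b1 b2 pr θ = 1 := by
  have hlow : ¬ (a1 + a2) * pr θ < b1 := by nlinarith
  rw [thmOneSol, if_neg hlow, if_neg h.not_ge]

/-- The integrand of `risk`, with `p = pr θ` and `i = I θ`. -/
noncomputable def pointLoss (a1 a2 b1 b2 p i : ℝ) : ℝ :=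
  (a1 * (1 - i) + a2 / 2 * (1 - i) ^ 2) * p + b1 * i + b2 / 2 * i ^ 2

theorem pointLoss_one_le {a1 a2 b1 b2 p i : ℝ} (ha2 : 0 ≤ a2) (hb2 : 0 ≤ b2) (hp : 0 ≤ p)
    (h : b1 + b2 < a1 * p) (hi : i ∈ Set.Icc (0 : ℝ) 1) :
    pointLoss a1 a2 b1 b2 p 1 ≤ pointLoss a1 a2 b1 b2 p i := by
  obtain ⟨hi0, hi1⟩ := hi
  have hdiff : pointLoss a1 a2 b1 b2 p i - pointLoss a1 a2 b1 b2 p 1 =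
      (1 - i) * (a1 * p - b1 - b2 * (1 + i) / 2) + a2 * p * (1 - i) ^ 2 / 2 := by
    unfold pointLoss; ring
  have hfactor : 0 ≤ a1 * p - b1 - b2 * (1 + i) / 2 := by nlinarith
  have hquad : 0 ≤ a2 * p * (1 - i) ^ 2 / 2 := by positivity
  nlinarith [mul_nonneg (sub_nonneg.2 hi1) hfactor]

theorem stmt5_general (Θ : Set ℝ) (hΘm : MeasurableSet Θ)
    (a1 a2 b1 b2 : ℝ)
    (ha1 : 0 < a1) (ha2 : 0 ≤ a2) (hb2 : 0 ≤ b2)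
    (pr : ℝ → ℝ) (hpr0 : ∀ θ ∈ Θ, 0 ≤ pr θ)
    (hinf : (b1 + b2) / a1 < sInf (pr '' Θ)) :
    (∀ θ ∈ Θ, thmOneSol a1 a2 b1 b2 pr θ = 1) ∧
    (∀ I : ℝ → ℝ, Measurable I → (∀ θ ∈ Θ, I θ ∈ Set.Icc (0 : ℝ) 1) →
      risk Θ a1 a2 b1 b2 pr (fun _ => 1) ≤ risk Θ a1 a2 b1 b2 pr I) := by
  have hbdd : BddBelow (pr '' Θ) := ⟨0, by rintro _ ⟨θ, hθ, rfl⟩; exact hpr0 θ hθ⟩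
  have hdominant : ∀ θ ∈ Θ, b1 + b2 < a1 * pr θ := fun θ hθ =>
    lt_mul_of_div_lt_csInf_image ha1 hbdd hinf hθ
  refine ⟨fun θ hθ => thmOneSol_eq_one_of_lt ha2 hb2 (hpr0 θ hθ) (hdominant θ hθ), ?_⟩
  intro I _ hI
  exact setLIntegral_mono' hΘm fun θ hθ => ENNReal.ofReal_le_ofReal
    (pointLoss_one_le ha2 hb2 (hpr0 θ hθ) (hdominant θ hθ) (hI θ hθ))

/-- if `a₁ > 0` and the prior density `π` is bounded away from
zero with `inf_{θ∈Θ} π(θ) > (b₁ + b₂)/a₁`, then the Theorem-1 solution is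
identically one on `Θ`, and (when `Θ` has finite length) the membership
function `I ≡ 1` minimizes the risk. -/
theorem stmt5 (Θ : Set ℝ) (hΘ : Θ.OrdConnected) (hΘm : MeasurableSet Θ)
    (a1 a2 b1 b2 : ℝ)
    (ha1 : 0 < a1) (ha2 : 0 ≤ a2) (hb1 : 0 ≤ b1) (hb2 : 0 ≤ b2)
    (hb : 0 < b1 + b2)
    (pr : ℝ → ℝ) (hprm : Measurable pr) (hpr0 : ∀ θ ∈ Θ, 0 ≤ pr θ)
    (hprdens : ∫⁻ θ in Θ, ENNReal.ofReal (pr θ) = 1)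
    (hinf : (b1 + b2) / a1 < sInf (pr '' Θ))
    (hfin : volume Θ < ⊤) :
    (∀ θ ∈ Θ, thmOneSol a1 a2 b1 b2 pr θ = 1) ∧
    (∀ I : ℝ → ℝ, Measurable I → (∀ θ ∈ Θ, I θ ∈ Set.Icc (0 : ℝ) 1) →
      risk Θ a1 a2 b1 b2 pr (fun _ => 1) ≤ risk Θ a1 a2 b1 b2 pr I) :=
  stmt5_general Θ hΘm a1 a2 b1 b2 ha1 ha2 hb2 pr hpr0 hinf
end

section
/- Let Θ ⊆ ℝ be a bounded interval, let 0 ≤ r₁ < r₂, let a₁ > 0, b₁ ≥ 0, b₂ > 0 with a₂ = 0 satisfy b₁/a₁ = r₁ and (b₁+b₂)/a₁ = r₂, and let I_A : Θ → [0,1] be measurable. Suppose π : Θ → [0,∞) is a measurable probability density satisfying: π(θ) ≤ r₁ whenever I_A(θ) = 0; π(θ) = (r₂ − r₁)I_A(θ) + r₁ whenever 0 < I_A(θ) < 1; and π(θ) ≥ r₂ whenever I_A(θ) = 1. Then the Theorem-1 solution associated with π equals I_A at every θ ∈ Θ. -/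
/-- The membership value `I_π(θ)` of equation (8), as a function of `p = π(θ)`. -/
noncomputable def rampMembership (r1 r2 p : ℝ) : ℝ :=
  if p < r1 then 0 else if p ≤ r2 then (p - r1) / (r2 - r1) else 1

theorem thmOneSol_eq_rampMembership {a1 : ℝ} (ha1 : 0 < a1) (b1 b2 : ℝ) (pr : ℝ → ℝ) (θ : ℝ) :
    thmOneSol a1 0 b1 b2 pr θ = rampMembership (b1 / a1) ((b1 + b2) / a1) (pr θ) := by
  have hslope : (pr θ - b1 / a1) / ((b1 + b2) / a1 - b1 / a1) = (a1 * pr θ - b1) / b2 := by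
    field_simp
    ring
  simp only [thmOneSol, rampMembership, add_zero, zero_mul, zero_add, hslope,
    lt_div_iff₀ ha1, le_div_iff₀ ha1, mul_comm a1]

theorem rampMembership_eq {r1 r2 p x : ℝ} (hr : r1 < r2) (hx : x ∈ Set.Icc (0 : ℝ) 1)
    (h0 : x = 0 → p ≤ r1) (hmid : 0 < x → x < 1 → p = (r2 - r1) * x + r1)
    (h1 : x = 1 → r2 ≤ p) :
    rampMembership r1 r2 p = x := by
  have hr' : r2 - r1 ≠ 0 := sub_ne_zero.2 hr.ne'
  obtain ⟨hx0, hx1⟩ := hx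
  rcases hx0.eq_or_lt with rfl | hx0
  · have hp := h0 rfl
    unfold rampMembership
    split_ifs with hlt
    · rfl
    · rw [le_antisymm hp (not_lt.1 hlt), sub_self, zero_div]
    · linarith
  rcases hx1.eq_or_lt with rfl | hx1
  · have hp := h1 rfl
    unfold rampMembership
    split_ifs with hlt hle
    · linarith
    · rw [le_antisymm hle hp, div_self hr']
    · rfl
  · have hp := hmid hx0 hx1
    have hlow : r1 ≤ p := by nlinarith
    have hhigh : p ≤ r2 := by nlinarith
    rw [rampMembership, if_neg hlow.not_gt, if_pos hhigh, hp]
    field_simp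
    ring

theorem stmt11_general (Θ : Set ℝ)
    (r1 r2 : ℝ) (hr12 : r1 < r2)
    (a1 b1 b2 : ℝ) (ha1 : 0 < a1)
    (hra : b1 / a1 = r1) (hrb : (b1 + b2) / a1 = r2)
    (IA : ℝ → ℝ)
    (hIA01 : ∀ θ ∈ Θ, IA θ ∈ Set.Icc (0 : ℝ) 1)
    (pr : ℝ → ℝ)
    (h0 : ∀ θ ∈ Θ, IA θ = 0 → pr θ ≤ r1)
    (hmid : ∀ θ ∈ Θ, 0 < IA θ → IA θ < 1 → pr θ = (r2 - r1) * IA θ + r1)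
    (h1 : ∀ θ ∈ Θ, IA θ = 1 → r2 ≤ pr θ) :
    ∀ θ ∈ Θ, thmOneSol a1 0 b1 b2 pr θ = IA θ := by
  intro θ hθ
  rw [thmOneSol_eq_rampMembership ha1, hra, hrb]
  exact rampMembership_eq hr12 (hIA01 θ hθ) (h0 θ hθ) (hmid θ hθ) (h1 θ hθ)

/-- equation (8) of the paper: any probability density `π`
with `π ≤ r₁` on `{I_A = 0}`, `π = (r₂−r₁)I_A + r₁` on `{0 < I_A < 1}` and
`π ≥ r₂` on `{I_A = 1}` has Theorem-1 solution (with `a₂ = 0`,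
`r₁ = b₁/a₁`, `r₂ = (b₁+b₂)/a₁`) equal to `I_A` on all of `Θ`. -/
theorem stmt11 (Θ : Set ℝ) (hΘ : Θ.OrdConnected) (hΘm : MeasurableSet Θ)
    (hΘbdd : Bornology.IsBounded Θ)
    (r1 r2 : ℝ) (hr1 : 0 ≤ r1) (hr12 : r1 < r2)
    (a1 b1 b2 : ℝ) (ha1 : 0 < a1) (hb1 : 0 ≤ b1) (hb2 : 0 < b2)
    (hra : b1 / a1 = r1) (hrb : (b1 + b2) / a1 = r2)
    (IA : ℝ → ℝ) (hIAm : Measurable IA)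
    (hIA01 : ∀ θ ∈ Θ, IA θ ∈ Set.Icc (0 : ℝ) 1)
    (pr : ℝ → ℝ) (hprm : Measurable pr) (hpr0 : ∀ θ ∈ Θ, 0 ≤ pr θ)
    (hprdens : (∫ θ in Θ, pr θ) = 1)
    (h0 : ∀ θ ∈ Θ, IA θ = 0 → pr θ ≤ r1)
    (hmid : ∀ θ ∈ Θ, 0 < IA θ → IA θ < 1 → pr θ = (r2 - r1) * IA θ + r1)
    (h1 : ∀ θ ∈ Θ, IA θ = 1 → r2 ≤ pr θ) :
    ∀ θ ∈ Θ, thmOneSol a1 0 b1 b2 pr θ = IA θ :=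
  stmt11_general Θ r1 r2 hr12 a1 b1 b2 ha1 hra hrb IA hIA01 pr h0 hmid h1
end
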